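/- Let γ̃(t) = (ln t, 0, …, 0) in coordinates (u, v, x) on ℝ^{n+2} with metric g = 2du dv − 2(sin(v) − ∑ aᵢ(cos xᵢ − 1)) du² + ∑ dxᵢ². Then γ̃ : (0, ∞) → ℝ^{n+2} satisfies the geodesic equation for g and is maximal (cannot be extended past t = 0). -/

import Mathlib

open scoped BigOperators

noncomputable def pd {m : ℕ} (i : Fin m) (f : (Fin m → ℝ) → ℝ) (x : Fin m → ℝ) : ℝ :=
  fderiv ℝ f x (Pi.single i 1)

noncomputable def christoffel {m : ℕ} (g : (Fin m → ℝ) → Matrix (Fin m) (Fin m) ℝ)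
    (x : Fin m → ℝ) (k i j : Fin m) : ℝ :=
  (1 / 2) * ∑ l : Fin m, (g x)⁻¹ k l *
    (pd i (fun y => g y l j) x + pd j (fun y => g y l i) x - pd l (fun y => g y i j) x)

def IsGeodesicOn {m : ℕ} (g : (Fin m → ℝ) → Matrix (Fin m) (Fin m) ℝ)
    (γ : ℝ → Fin m → ℝ) (s : Set ℝ) : Prop :=
  ContDiffOn ℝ 2 γ s ∧ ∀ t ∈ s, ∀ k : Fin m,
    deriv (deriv γ) t k =
      -∑ i : Fin m, ∑ j : Fin m, christoffel g (γ t) k i j * deriv γ t i * deriv γ t j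

/-- The metric `g = 2 du dv − 2(sin v − ∑ aᵢ(cos xᵢ − 1)) du² + ∑ dxᵢ²` on `ℝ^{n+2}`,
with coordinates `p 0 = u`, `p 1 = v`, `p (i+2) = xᵢ`. -/
noncomputable def cpMetric {n : ℕ} (a : Fin n → ℝ)
    (p : Fin (n + 2) → ℝ) : Matrix (Fin (n + 2)) (Fin (n + 2)) ℝ :=
  Matrix.of fun i j =>
    if i = 0 ∧ j = 0 then
      -2 * (Real.sin (p 1) - ∑ k : Fin n, a k * (Real.cos (p k.succ.succ) - 1))
    else if (i = 0 ∧ j = 1) ∨ (i = 1 ∧ j = 0) then 1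
    else if i = j ∧ i ≠ 0 ∧ i ≠ 1 then 1 else 0

/-- The curve `γ̃(t) = (ln t, 0, …, 0)`. -/
noncomputable def logCurve {n : ℕ} (t : ℝ) : Fin (n + 2) → ℝ := fun k =>
  if k = 0 then Real.log t else 0

/-!
On the axis `{v = 0, x = 0}` the metric is the constant permutation matrix of the swap `u ↔ v`
(hence its own inverse), and of its first derivatives only `∂_v g_uu = -2` survives. So the one
Christoffel symbol seen by a curve moving in the `u`-direction is `Γ^u_uu = 1`, and the geodesic
equation along the axis reduces to `u'' = -u'²`, which `u = ln t` solves. Maximality holds because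
`ln t → -∞` as `t → 0⁺`, so no geodesic, being continuous, can extend the curve to `t = 0`.
-/

open Real Set Filter Topology

lemma Matrix.inv_permMatrix {ι R : Type*} [Fintype ι] [DecidableEq ι] [CommRing R]
    (σ : Equiv.Perm ι) : (σ.permMatrix R)⁻¹ = σ⁻¹.permMatrix R :=
  Matrix.inv_eq_left_inv (by rw [← Matrix.permMatrix_mul, mul_inv_cancel, Matrix.permMatrix_one])

lemma hasDerivAt_pi_single {ι : Type*} [Fintype ι] [DecidableEq ι] {f : ℝ → ℝ} {f' t : ℝ}
    (i : ι) (hf : HasDerivAt f f' t) :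
    HasDerivAt (fun s => (Pi.single i (f s) : ι → ℝ)) (Pi.single i f') t := by
  rw [hasDerivAt_pi]
  intro j
  rcases eq_or_ne j i with rfl | hj
  · simpa using hf
  · simpa [hj] using hasDerivAt_const t (0 : ℝ)

namespace cpMetric

variable {n : ℕ} (a : Fin n → ℝ) {p : Fin (n + 2) → ℝ}

lemma eq_permMatrix_swap (hp : ∀ k ≠ 0, p k = 0) :
    cpMetric a p = (Equiv.swap 0 1).permMatrix ℝ := by
  ext i j
  have h1 : p 1 = 0 := hp 1 (by simp)
  have h2 : ∀ k : Fin n, p k.succ.succ = 0 := fun k => hp _ (Fin.succ_ne_zero _)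
  simp only [cpMetric, Matrix.of_apply, PEquiv.toMatrix_apply, Equiv.toPEquiv_apply,
    Option.mem_def, Option.some_inj, h1, h2]
  have h01 : (0 : Fin (n + 2)) ≠ 1 := by simp
  rcases eq_or_ne i 0 with rfl | hi0
  · rcases eq_or_ne j 0 with rfl | hj0 <;> simp [*, eq_comm]
  rcases eq_or_ne i 1 with rfl | hi1
  · rcases eq_or_ne j 0 with rfl | hj0 <;> simp [*, eq_comm]
  · rw [Equiv.swap_apply_of_ne_of_ne hi0 hi1]
    rcases eq_or_ne i j with rfl | hij <;> simp [*]

lemma pd_apply_eq_zero {l j : Fin (n + 2)} (h : ¬(l = 0 ∧ j = 0)) (i : Fin (n + 2)) :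
    pd i (fun y => cpMetric a y l j) p = 0 := by
  simp [cpMetric, if_neg h, pd]

lemma pd_apply_zero_zero (hp : ∀ k ≠ 0, p k = 0) (i : Fin (n + 2)) :
    pd i (fun y => cpMetric a y 0 0) p = if i = 1 then -2 else 0 := by
  have hsin := (hasFDerivAt_apply (𝕜 := ℝ) (F' := fun _ => ℝ) 1 p).sin
  have hcos : ∀ k : Fin n,
      HasFDerivAt (fun y : Fin (n + 2) → ℝ => a k * (cos (y k.succ.succ) - 1)) 0 p := fun k => by
    simpa [hp _ (Fin.succ_ne_zero _)] using
      ((hasFDerivAt_apply (𝕜 := ℝ) (F' := fun _ => ℝ) k.succ.succ p).cos.sub_const 1).const_mul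
        (a k)
  have hg := (hsin.fun_sub (HasFDerivAt.fun_sum (u := .univ) fun k _ => hcos k)).const_mul
    (-2 : ℝ)
  have hfun : (fun y => cpMetric a y 0 0) =
      fun y => -2 * (sin (y 1) - ∑ k, a k * (cos (y k.succ.succ) - 1)) := by
    ext y; simp [cpMetric]
  rw [pd, hfun, hg.fderiv]
  rcases eq_or_ne i 1 with rfl | hi <;> simp [*]

lemma christoffel_zero_zero (hp : ∀ k ≠ 0, p k = 0) (k : Fin (n + 2)) :
    christoffel (cpMetric a) p k 0 0 = if k = 0 then 1 else 0 := by
  have hterm : ∀ l : Fin (n + 2), pd 0 (fun y => cpMetric a y l 0) p +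
      pd 0 (fun y => cpMetric a y l 0) p - pd l (fun y => cpMetric a y 0 0) p =
        if l = 1 then 2 else 0 := by
    intro l
    rw [pd_apply_zero_zero a hp]
    rcases eq_or_ne l 0 with rfl | hl
    · simp [pd_apply_zero_zero a hp]
    · rw [pd_apply_eq_zero a (fun h => hl h.1)]
      split_ifs <;> norm_num
  rw [christoffel, eq_permMatrix_swap a hp, Matrix.inv_permMatrix, Equiv.swap_inv]
  simp only [hterm, PEquiv.toMatrix_apply, Equiv.toPEquiv_apply, Option.mem_def, Option.some_inj]
  rcases eq_or_ne k 0 with rfl | hk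
  · simp
  · simp [hk, Equiv.swap_apply_eq_iff]

end cpMetric

namespace logCurve

variable {n : ℕ}

lemma eq_pi_single (t : ℝ) : logCurve (n := n) t = Pi.single 0 (log t) := by
  ext k; simp [logCurve, Pi.single_apply]

lemma deriv_eq {t : ℝ} (ht : t ≠ 0) :
    deriv (logCurve (n := n)) t = Pi.single 0 t⁻¹ := by
  simp only [funext eq_pi_single]
  exact (hasDerivAt_pi_single 0 (hasDerivAt_log ht)).deriv

lemma deriv_deriv_eq {t : ℝ} (ht : t ≠ 0) :
    deriv (deriv (logCurve (n := n))) t = Pi.single 0 (-(t ^ 2)⁻¹) := by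
  have hev : deriv (logCurve (n := n)) =ᶠ[𝓝 t] fun s => Pi.single 0 s⁻¹ := by
    filter_upwards [isOpen_ne.mem_nhds ht] with s hs using deriv_eq hs
  rw [hev.deriv_eq]
  exact (hasDerivAt_pi_single 0 (hasDerivAt_inv ht)).deriv

lemma contDiffOn : ContDiffOn ℝ 2 (logCurve (n := n)) (Ioi 0) := by
  simp only [funext eq_pi_single]
  exact (contDiff_single ..).comp_contDiffOn (contDiffOn_log.mono fun t ht => ne_of_gt ht)

lemma not_tendsto (p : Fin (n + 2) → ℝ) : ¬ Tendsto (logCurve (n := n)) (𝓝[>] 0) (𝓝 p) := by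
  intro h
  have hlog : Tendsto log (𝓝[>] 0) (𝓝 (p 0)) := by
    simpa [Function.comp_def, logCurve] using (continuous_apply 0).continuousAt.tendsto.comp h
  exact not_tendsto_nhds_of_tendsto_atBot tendsto_log_nhdsGT_zero _ hlog

end logCurve

theorem isGeodesicOn_logCurve {n : ℕ} (a : Fin n → ℝ) :
    IsGeodesicOn (cpMetric a) (logCurve (n := n)) (Ioi 0) := by
  refine ⟨logCurve.contDiffOn, fun t ht k => ?_⟩
  have ht0 : t ≠ 0 := ne_of_gt ht
  have hγ : ∀ k ≠ 0, logCurve (n := n) t k = 0 := fun k hk => by simp [logCurve, hk]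
  simp only [logCurve.deriv_deriv_eq ht0, logCurve.deriv_eq ht0, Pi.single_apply, mul_ite,
    ite_mul, zero_mul, mul_zero, Finset.sum_ite_eq', Finset.mem_univ, if_true,
    cpMetric.christoffel_zero_zero a hγ]
  split_ifs <;> simp [sq]

/-- The curve `γ̃(t) = (ln t, 0, …, 0)` satisfies the geodesic equation
of `g = 2dudv − 2(sin v − ∑ aᵢ(cos xᵢ − 1))du² + ∑ dxᵢ²` on `(0,∞)` and is maximal:
it cannot be extended as a geodesic past `t = 0`. -/
theorem stmt_18 (n : ℕ) (a : Fin n → ℝ) :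
    IsGeodesicOn (cpMetric a) (logCurve (n := n)) (Set.Ioi 0) ∧
    ¬ ∃ ε : ℝ, 0 < ε ∧ ∃ δ : ℝ → Fin (n + 2) → ℝ,
        IsGeodesicOn (cpMetric a) δ (Set.Ioi (-ε)) ∧
        ∀ t ∈ Set.Ioi (0 : ℝ), δ t = logCurve (n := n) t := by
  refine ⟨isGeodesicOn_logCurve a, ?_⟩
  rintro ⟨ε, hε, δ, ⟨hδ, -⟩, hδ_eq⟩
  have hδ_cont : ContinuousAt δ 0 :=
    hδ.continuousOn.continuousAt (Ioi_mem_nhds (neg_lt_zero.mpr hε))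
  refine logCurve.not_tendsto (δ 0) ((hδ_cont.tendsto.mono_left nhdsWithin_le_nhds).congr' ?_)
  filter_upwards [self_mem_nhdsWithin] with t ht using hδ_eq t ht
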